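/- arXiv:2401.07668 — 4 statements merged into one kernel-verified Lean document; each statement's English description precedes it below -/
import Mathlib

section
/- Let ψ ∈ C²([0,∞);[0,∞)) and set Φ(v) := ψ(|v|²) for v ∈ ℝ^d. Assume C_Φ := ∫_{ℝ^d} e^{-Φ(v)} dv < ∞, ∫_{ℝ^d} (|∇Φ(v)|² + ‖∇²Φ(v)‖) μ₂(dv) < ∞ (operator norm of the Hessian), and lim_{|v|→∞} |∇(e^{-Φ})(v)| = 0. Let U ∈ C¹(ℝ^d). Then for every g ∈ C²_b(ℝ^d) and every x ∈ ℝ^d: ∫_{ℝ^d} ( ⟨∇Φ(v), (∇²g(x)) ∇Φ(v)⟩ − ⟨∇U(x), (∇²Φ(v)) ∇g(x)⟩ ) μ₂(dv) = c* ( Δg(x) − ⟨∇U(x), ∇g(x)⟩ ), where c* := (2 ω_d / C_Φ) ∫_0^∞ u^{d/2} ψ'(u)² e^{-ψ(u)} du and ω_d is the volume of the unit ball in ℝ^d. In other words, the kinetic projection identity π L₀² π = c* L_OD holds, where L_OD g = Δg − ⟨∇U, ∇g⟩ is the overdamped Langevin generator. -/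
/-!
Since `Φ` is radial, `∇Φ(v) = 2 ψ'(|v|²) v`. The reflections `vᵢ ↦ -vᵢ` and the coordinate swaps
preserve `μ₂`, so the second-moment matrix `∫ ∇Φ ⊗ ∇Φ dμ₂` is a multiple `c • I` of the identity,
and polar coordinates followed by the substitution `u = r²` identify `c` with `c*`. Hence the first
term integrates to `c* Δg(x)`. For the second term, integration by parts against `e^{-Φ}` (Stein's
identity for `μ₂`) gives `∫ ⟨a, ∇²Φ b⟩ dμ₂ = ∫ ⟨a, ∇Φ⟩ ⟨b, ∇Φ⟩ dμ₂ = c* ⟨a, b⟩`.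
-/

open MeasureTheory Real Filter Topology Set
open scoped RealInnerProductSpace

noncomputable section

/-- `d`-dimensional Euclidean space. -/
abbrev E (d : ℕ) : Type := EuclideanSpace ℝ (Fin d)

/-- The probability measure `μ₂` with density proportional to `e^{-Φ}`. -/
def mu2 (d : ℕ) (Φ : E d → ℝ) : Measure (E d) :=
  volume.withDensity fun v =>
    ENNReal.ofReal (Real.exp (-(Φ v)) / ∫ w : E d, Real.exp (-(Φ w)))

/-- The Laplacian of `g : ℝ^d → ℝ`, as the trace of the Hessian. -/
def lapl (d : ℕ) (g : E d → ℝ) (x : E d) : ℝ :=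
  ∑ i : Fin d, ⟪(fderiv ℝ (gradient g) x) (EuclideanSpace.single i 1),
    EuclideanSpace.single i 1⟫

section RadialDerivative

variable {F : Type*} [NormedAddCommGroup F] [InnerProductSpace ℝ F] {θ : ℝ → ℝ} {c : ℝ} {v : F}

theorem HasDerivWithinAt.hasFDerivAt_comp_norm_sq (hθ : HasDerivWithinAt θ c (Ici 0) (‖v‖ ^ 2)) :
    HasFDerivAt (fun w : F => θ (‖w‖ ^ 2)) ((2 * c) • innerSL ℝ v) v := by
  have h := hθ.comp_hasFDerivAt v (hasStrictFDerivAt_norm_sq v).hasFDerivAt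
    (Eventually.of_forall fun w => sq_nonneg ‖w‖)
  refine h.congr_fderiv ?_
  ext w
  simp only [smul_apply, innerSL_apply_apply, smul_eq_mul]
  ring

theorem HasDerivWithinAt.hasGradientAt_comp_norm_sq [CompleteSpace F]
    (hθ : HasDerivWithinAt θ c (Ici 0) (‖v‖ ^ 2)) :
    HasGradientAt (fun w : F => θ (‖w‖ ^ 2)) ((2 * c) • v) v := by
  rw [hasGradientAt_iff_hasFDerivAt]
  refine hθ.hasFDerivAt_comp_norm_sq.congr_fderiv ?_
  ext w
  simp [InnerProductSpace.toDual_apply_apply]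

theorem ContDiffOn.differentiable_comp_norm_sq (hθ : ContDiffOn ℝ 1 θ (Ici 0)) :
    Differentiable ℝ fun w : F => θ (‖w‖ ^ 2) := fun v =>
  ((hθ.differentiableOn one_ne_zero _ (sq_nonneg ‖v‖)).hasDerivWithinAt
    ).hasFDerivAt_comp_norm_sq.differentiableAt

theorem ContDiffOn.gradient_comp_norm_sq [CompleteSpace F] (hθ : ContDiffOn ℝ 1 θ (Ici 0)) :
    gradient (fun w : F => θ (‖w‖ ^ 2)) = fun v => (2 * derivWithin θ (Ici 0) (‖v‖ ^ 2)) • v :=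
  funext fun v => ((hθ.differentiableOn one_ne_zero _ (sq_nonneg ‖v‖)).hasDerivWithinAt
    ).hasGradientAt_comp_norm_sq.gradient

theorem ContDiffOn.differentiable_gradient_comp_norm_sq [CompleteSpace F]
    (hθ : ContDiffOn ℝ 2 θ (Ici 0)) : Differentiable ℝ (gradient fun w : F => θ (‖w‖ ^ 2)) := by
  have hθ' : ContDiffOn ℝ 1 (derivWithin θ (Ici 0)) (Ici 0) :=
    hθ.derivWithin (uniqueDiffOn_Ici 0) le_rfl
  rw [(hθ.of_le one_le_two).gradient_comp_norm_sq]
  exact (hθ'.differentiable_comp_norm_sq.const_mul 2).smul differentiable_id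

end RadialDerivative

section RadialMoments

variable {d : ℕ}

theorem integral_coord_mul_coord_radial_of_ne (f : ℝ → ℝ) {i j : Fin d} (hij : i ≠ j) :
    ∫ v : E d, v i * v j * f ‖v‖ = 0 := by
  let σ : E d ≃ₗᵢ[ℝ] E d := LinearIsometryEquiv.piLpCongrRight 2
    fun k => if k = i then LinearIsometryEquiv.neg ℝ else LinearIsometryEquiv.refl ℝ ℝ
  have hσ : ∀ (v : E d) (k : Fin d), σ v k = if k = i then -v k else v k := by
    intro v k
    simp only [σ, LinearIsometryEquiv.piLpCongrRight_apply, PiLp.toLp_apply]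
    split <;> simp
  have hcomp := σ.measurePreserving.integral_comp σ.toHomeomorph.measurableEmbedding
    fun v : E d => v i * v j * f ‖v‖
  have hodd : ∀ v : E d, σ v i * σ v j * f ‖σ v‖ = -(v i * v j * f ‖v‖) := by
    intro v
    rw [σ.norm_map, hσ v i, hσ v j, if_pos rfl, if_neg hij.symm]
    ring
  simp only [hodd, integral_neg] at hcomp
  linarith

theorem integral_sq_coord_radial_eq (f : ℝ → ℝ) (i j : Fin d) :
    ∫ v : E d, v i ^ 2 * f ‖v‖ = ∫ v : E d, v j ^ 2 * f ‖v‖ := by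
  let τ : E d ≃ₗᵢ[ℝ] E d := LinearIsometryEquiv.piLpCongrLeft 2 ℝ ℝ (Equiv.swap i j)
  have hcomp := τ.measurePreserving.integral_comp τ.toHomeomorph.measurableEmbedding
    fun v : E d => v i ^ 2 * f ‖v‖
  have hswap : ∀ v : E d, τ v i ^ 2 * f ‖τ v‖ = v j ^ 2 * f ‖v‖ := by
    intro v
    simp [τ, LinearIsometryEquiv.piLpCongrLeft_apply, Equiv.piCongrLeft'_apply]
  simp only [hswap] at hcomp
  exact hcomp.symm

theorem integral_sq_coord_radial {f : ℝ → ℝ} (hf : Measurable f)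
    (hint : Integrable fun v : E d => ‖v‖ ^ 2 * f ‖v‖) (i : Fin d) :
    ∫ v : E d, v i ^ 2 * f ‖v‖
      = (volume (Metric.ball (0 : E d) 1)).toReal * ∫ r in Ioi 0, r ^ (d + 1) * f r := by
  have : Nonempty (Fin d) := ⟨i⟩
  have hd : (d : ℝ) ≠ 0 := Nat.cast_ne_zero.mpr (Fin.pos i).ne'
  have hcoord : ∀ k : Fin d, Integrable fun v : E d => v k ^ 2 * f ‖v‖ := fun k =>
    hint.norm.mono' (by fun_prop) (Eventually.of_forall fun v => by
      rw [norm_mul, norm_mul, norm_pow, norm_pow, Real.norm_eq_abs (v k)]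
      gcongr
      simpa using PiLp.norm_apply_le v k)
  have htrace : (d : ℝ) * ∫ v : E d, v i ^ 2 * f ‖v‖ = ∫ v : E d, ‖v‖ ^ 2 * f ‖v‖ := by
    calc (d : ℝ) * ∫ v : E d, v i ^ 2 * f ‖v‖ = ∑ k : Fin d, ∫ v : E d, v k ^ 2 * f ‖v‖ := by
          simp [integral_sq_coord_radial_eq f _ i]
      _ = ∫ v : E d, ‖v‖ ^ 2 * f ‖v‖ := by
          rw [← integral_finsetSum _ fun k _ => hcoord k]
          simp [← Finset.sum_mul, EuclideanSpace.norm_sq_eq]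
  have hpolar := integral_fun_norm_addHaar (volume : Measure (E d)) fun r => r ^ 2 * f r
  rw [finrank_euclideanSpace_fin] at hpolar
  rw [← mul_right_inj' hd, htrace, hpolar, nsmul_eq_mul, smul_eq_mul, measureReal_def]
  congr 2
  refine setIntegral_congr_fun measurableSet_Ioi fun r _ => ?_
  have hexp : d - 1 + 2 = d + 1 := by have := i.pos; omega
  rw [smul_eq_mul, ← mul_assoc, ← pow_add, hexp]

theorem integral_pow_mul_comp_sq_Ioi (n : ℕ) (h : ℝ → ℝ) :
    ∫ r in Ioi 0, r ^ (n + 1) * h (r ^ 2) = (∫ u in Ioi 0, u ^ ((n : ℝ) / 2) * h u) / 2 := by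
  rw [← integral_comp_rpow_Ioi (fun u => u ^ ((n : ℝ) / 2) * h u) two_ne_zero,
    eq_div_iff two_ne_zero, ← integral_mul_const]
  refine setIntegral_congr_fun measurableSet_Ioi fun r (hr : 0 < r) => ?_
  have hpow : (r ^ 2) ^ ((n : ℝ) / 2) = r ^ n := by
    rw [← Real.rpow_natCast r 2, ← Real.rpow_mul hr.le, Nat.cast_ofNat,
      mul_div_cancel₀ _ two_ne_zero, Real.rpow_natCast]
  rw [smul_eq_mul, Real.rpow_two, hpow, abs_two, show (2 : ℝ) - 1 = 1 by norm_num, Real.rpow_one]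
  ring

theorem integral_coord_mul_coord_comp_norm_sq {h : ℝ → ℝ} (hh : ContinuousOn h (Ici 0))
    (hint : Integrable fun v : E d => ‖v‖ ^ 2 * h (‖v‖ ^ 2)) (i j : Fin d) :
    ∫ v : E d, v i * v j * h (‖v‖ ^ 2)
      = if i = j then (volume (Metric.ball (0 : E d) 1)).toReal / 2
          * ∫ u in Ioi 0, u ^ ((d : ℝ) / 2) * h u else 0 := by
  split_ifs with hij
  · subst hij
    have hmeas : Measurable fun r : ℝ => h (r ^ 2) :=
      (hh.comp_continuous (continuous_pow 2) fun r => sq_nonneg r).measurable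
    simp_rw [← sq]
    rw [integral_sq_coord_radial hmeas hint, integral_pow_mul_comp_sq_Ioi]
    ring
  · exact integral_coord_mul_coord_radial_of_ne (fun r => h (r ^ 2)) hij

end RadialMoments

section Isotropic

variable {α : Type*} [MeasurableSpace α] {μ : Measure α} {d : ℕ} {G : α → E d} {c : ℝ}

theorem integrable_inner_mul_inner (hG : MemLp G 2 μ) (a b : E d) :
    Integrable (fun x => ⟪a, G x⟫ * ⟪b, G x⟫) μ :=
  (hG.const_inner a).integrable_mul (hG.const_inner b)

theorem inner_self_apply_eq_sum (H : E d →L[ℝ] E d) (w : E d) :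
    ⟪w, H w⟫ = ∑ i, ⟪EuclideanSpace.single i 1, w⟫
      * ⟪ContinuousLinearMap.adjoint H (EuclideanSpace.single i 1), w⟫ := by
  rw [← (EuclideanSpace.basisFun (Fin d) ℝ).sum_inner_mul_inner w (H w)]
  refine Finset.sum_congr rfl fun i _ => ?_
  rw [EuclideanSpace.basisFun_apply, real_inner_comm w, ContinuousLinearMap.adjoint_inner_left]

theorem integrable_inner_self_apply (hG : MemLp G 2 μ) (H : E d →L[ℝ] E d) :
    Integrable (fun x => ⟪G x, H (G x)⟫) μ := by
  simp_rw [inner_self_apply_eq_sum H]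
  exact integrable_finsetSum _ fun i _ => integrable_inner_mul_inner hG _ _

theorem integral_inner_mul_inner_of_isotropic (hG : MemLp G 2 μ)
    (hcov : ∀ i j, ∫ x, G x i * G x j ∂μ = if i = j then c else 0) (a b : E d) :
    ∫ x, ⟪a, G x⟫ * ⟪b, G x⟫ ∂μ = c * ⟪a, b⟫ := by
  have hcoord : ∀ i, MemLp (fun x => G x i) 2 μ := fun i =>
    (EuclideanSpace.proj i : E d →L[ℝ] ℝ).comp_memLp' hG
  have hint : ∀ i j, Integrable (fun x => G x i * G x j) μ := fun i j =>
    (hcoord i).integrable_mul (hcoord j)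
  have hexp : ∀ x, ⟪a, G x⟫ * ⟪b, G x⟫ = ∑ i, ∑ j, a i * b j * (G x i * G x j) := by
    intro x
    simp only [PiLp.inner_apply, RCLike.inner_apply, conj_trivial, Finset.sum_mul_sum]
    exact Finset.sum_congr rfl fun i _ => Finset.sum_congr rfl fun j _ => by ring
  simp_rw [hexp]
  rw [integral_finsetSum _ fun i _ => integrable_finsetSum _ fun j _ => (hint i j).const_mul _]
  simp_rw [integral_finsetSum _ fun j _ => (hint _ j).const_mul _, integral_const_mul, hcov]
  simp [PiLp.inner_apply, Finset.mul_sum, mul_comm]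

theorem integral_inner_self_apply_of_isotropic (hG : MemLp G 2 μ)
    (hcov : ∀ i j, ∫ x, G x i * G x j ∂μ = if i = j then c else 0) (H : E d →L[ℝ] E d) :
    ∫ x, ⟪G x, H (G x)⟫ ∂μ
      = c * ∑ i, ⟪H (EuclideanSpace.single i 1), EuclideanSpace.single i 1⟫ := by
  simp_rw [inner_self_apply_eq_sum H]
  rw [integral_finsetSum _ fun i _ => integrable_inner_mul_inner hG _ _, Finset.mul_sum]
  simp_rw [integral_inner_mul_inner_of_isotropic hG hcov, ContinuousLinearMap.adjoint_inner_right]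

end Isotropic

theorem integrable_inner_fderiv_apply {d : ℕ} {μ : Measure (E d)} {G : E d → E d}
    (hDG : Integrable (fun v => ‖fderiv ℝ G v‖) μ) (a b : E d) :
    Integrable (fun v => ⟪a, fderiv ℝ G v b⟫) μ := by
  refine (hDG.const_mul (‖a‖ * ‖b‖)).mono'
    (measurable_const.inner (measurable_fderiv_apply_const ℝ G b)).aestronglyMeasurable
    (Eventually.of_forall fun v => ?_)
  calc ‖⟪a, fderiv ℝ G v b⟫‖ ≤ ‖a‖ * ‖fderiv ℝ G v b‖ := norm_inner_le_norm _ _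
    _ ≤ ‖a‖ * (‖fderiv ℝ G v‖ * ‖b‖) := by gcongr; exact (fderiv ℝ G v).le_opNorm b
    _ = ‖a‖ * ‖b‖ * ‖fderiv ℝ G v‖ := by ring

section Mu2

variable {d : ℕ} {Φ : E d → ℝ}

theorem integral_exp_neg_pos (hCΦ : Integrable fun v : E d => Real.exp (-(Φ v))) :
    0 < ∫ v : E d, Real.exp (-(Φ v)) := by
  rw [integral_pos_iff_support_of_nonneg (fun v => (Real.exp_pos _).le) hCΦ]
  simp [Function.support, (Real.exp_pos _).ne', NeZero.ne]

theorem integral_mu2 (hΦ : Measurable Φ) (f : E d → ℝ) :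
    ∫ v, f v ∂(mu2 d Φ) = (∫ v, f v * Real.exp (-(Φ v))) / ∫ v, Real.exp (-(Φ v)) := by
  rw [mu2, integral_withDensity_eq_integral_toReal_smul (by fun_prop)
    (Eventually.of_forall fun _ => ENNReal.ofReal_lt_top), ← integral_div]
  congr 1 with v
  rw [ENNReal.toReal_ofReal (by positivity), smul_eq_mul]
  ring

theorem integrable_mu2_iff (hΦ : Measurable Φ) (hCΦ : Integrable fun v : E d => Real.exp (-(Φ v)))
    {f : E d → ℝ} :
    Integrable f (mu2 d Φ) ↔ Integrable fun v => f v * Real.exp (-(Φ v)) := by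
  rw [mu2, integrable_withDensity_iff_integrable_smul' (by fun_prop)
    (Eventually.of_forall fun _ => ENNReal.ofReal_lt_top)]
  have hC := (integral_exp_neg_pos hCΦ).ne'
  rw [← integrable_const_mul_iff (isUnit_iff_ne_zero.mpr hC)]
  refine integrable_congr (Eventually.of_forall fun v => ?_)
  dsimp only
  rw [ENNReal.toReal_ofReal (by positivity), smul_eq_mul]
  field_simp

theorem isFiniteMeasure_mu2 (hCΦ : Integrable fun v : E d => Real.exp (-(Φ v))) :
    IsFiniteMeasure (mu2 d Φ) :=
  isFiniteMeasure_withDensity_ofReal (hCΦ.div_const _).hasFiniteIntegral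

theorem integral_inner_fderiv_gradient_mu2 (hΦ : Differentiable ℝ Φ)
    (hG : Differentiable ℝ (gradient Φ)) (hCΦ : Integrable fun v : E d => Real.exp (-(Φ v)))
    (hG2 : MemLp (gradient Φ) 2 (mu2 d Φ))
    (hDG : Integrable (fun v => ‖fderiv ℝ (gradient Φ) v‖) (mu2 d Φ)) (a b : E d) :
    ∫ v, ⟪a, fderiv ℝ (gradient Φ) v b⟫ ∂(mu2 d Φ)
      = ∫ v, ⟪a, gradient Φ v⟫ * ⟪b, gradient Φ v⟫ ∂(mu2 d Φ) := by
  have hmeas : Measurable Φ := hΦ.continuous.measurable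
  have := isFiniteMeasure_mu2 hCΦ
  have hρ : ∀ v, HasFDerivAt (fun w => Real.exp (-(Φ w)))
      (Real.exp (-(Φ v)) • -InnerProductSpace.toDual ℝ (E d) (gradient Φ v)) v := fun v =>
    ((hΦ v).hasGradientAt.hasFDerivAt.neg).exp
  have hρ' : ∀ v, fderiv ℝ (fun w => Real.exp (-(Φ w))) v b
      = -(⟪b, gradient Φ v⟫ * Real.exp (-(Φ v))) := fun v => by
    simp [(hρ v).fderiv, mul_comm]
  have hf' : ∀ v, fderiv ℝ (fun w => ⟪a, gradient Φ w⟫) v b = ⟪a, fderiv ℝ (gradient Φ) v b⟫ :=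
    fun v => by simp only [fderiv_inner_apply ℝ (differentiableAt_const a) (hG v), fderiv_fun_const,
      Pi.zero_apply, zero_apply, inner_zero_left, add_zero]
  have ibp := integral_mul_fderiv_eq_neg_fderiv_mul_of_integrable
    (f := fun w => ⟪a, gradient Φ w⟫) (g := fun w => Real.exp (-(Φ w))) (v := b)
    (by simpa only [hf'] using
      (integrable_mu2_iff hmeas hCΦ).1 (integrable_inner_fderiv_apply hDG a b))
    (by simp only [hρ', mul_neg, ← mul_assoc]
        exact ((integrable_mu2_iff hmeas hCΦ).1 (integrable_inner_mul_inner hG2 a b)).neg)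
    ((integrable_mu2_iff hmeas hCΦ).1 ((hG2.const_inner a).integrable one_le_two))
    (fun v _ => ((differentiableAt_const a).inner ℝ (hG v)))
    (fun v _ => (hρ v).differentiableAt)
  simp only [hρ', hf', mul_neg, integral_neg, neg_inj, ← mul_assoc] at ibp
  rw [integral_mu2 hmeas, integral_mu2 hmeas, ibp]

theorem integral_gradient_coord_mul_coord_mu2_of_radial {ψ : ℝ → ℝ}
    (hψ : ContDiffOn ℝ 2 ψ (Ici 0))
    (hCΦ : Integrable fun v : E d => Real.exp (-ψ (‖v‖ ^ 2)))
    (hint : Integrable (fun v => ‖gradient (fun w : E d => ψ (‖w‖ ^ 2)) v‖ ^ 2)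
      (mu2 d fun v => ψ (‖v‖ ^ 2))) (i j : Fin d) :
    ∫ v, gradient (fun w : E d => ψ (‖w‖ ^ 2)) v i * gradient (fun w : E d => ψ (‖w‖ ^ 2)) v j
        ∂(mu2 d fun v => ψ (‖v‖ ^ 2))
      = if i = j then
          (2 * (volume (Metric.ball (0 : E d) 1)).toReal / ∫ v : E d, Real.exp (-ψ (‖v‖ ^ 2)))
            * ∫ u in Ioi 0, u ^ ((d : ℝ) / 2) * derivWithin ψ (Ici 0) u ^ 2 * Real.exp (-ψ u)
        else 0 := by
  have hmeas : Measurable fun v : E d => ψ (‖v‖ ^ 2) :=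
    (hψ.of_le one_le_two).differentiable_comp_norm_sq.continuous.measurable
  set ψ' := derivWithin ψ (Ici 0)
  have hψ' : ContinuousOn ψ' (Ici 0) :=
    (hψ.derivWithin (m := 1) (uniqueDiffOn_Ici 0) le_rfl).continuousOn
  let h : ℝ → ℝ := fun u => 4 * ψ' u ^ 2 * Real.exp (-ψ u)
  have hh : ContinuousOn h (Ici 0) := by
    have := hψ.continuousOn
    fun_prop
  rw [(hψ.of_le one_le_two).gradient_comp_norm_sq] at hint ⊢
  have hint' : Integrable fun v : E d => ‖v‖ ^ 2 * h (‖v‖ ^ 2) := by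
    refine ((integrable_mu2_iff hmeas hCΦ).1 hint).congr (Eventually.of_forall fun v => ?_)
    simp only [h, norm_smul, Real.norm_eq_abs, mul_pow, sq_abs]
    ring
  have hpt : ∀ v : E d, ((2 * ψ' (‖v‖ ^ 2)) • v) i * ((2 * ψ' (‖v‖ ^ 2)) • v) j
      * Real.exp (-ψ (‖v‖ ^ 2)) = v i * v j * h (‖v‖ ^ 2) := fun v => by
    simp only [h, PiLp.smul_apply, smul_eq_mul]
    ring
  have hK : ∫ u in Ioi 0, u ^ ((d : ℝ) / 2) * h u
      = 4 * ∫ u in Ioi 0, u ^ ((d : ℝ) / 2) * ψ' u ^ 2 * Real.exp (-ψ u) := by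
    rw [← integral_const_mul]
    exact integral_congr_ae (Eventually.of_forall fun u => by simp only [h]; ring)
  rw [integral_mu2 hmeas, integral_congr_ae (Eventually.of_forall hpt),
    integral_coord_mul_coord_comp_norm_sq hh hint', hK]
  split_ifs <;> ring

end Mu2

theorem statement3_general
    (d : ℕ)
    (ψ : ℝ → ℝ) (hψ : ContDiffOn ℝ 2 ψ (Ici 0))
    (Φ : E d → ℝ) (hΦdef : ∀ v, Φ v = ψ (‖v‖ ^ 2))
    (hCΦ : Integrable fun v : E d => Real.exp (-(Φ v)))
    (hmom : Integrable (fun v : E d => ‖gradient Φ v‖ ^ 2 + ‖fderiv ℝ (gradient Φ) v‖)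
      (mu2 d Φ))
    (U : E d → ℝ)
    (g : E d → ℝ)
    (x : E d) :
    ∫ v, (⟪gradient Φ v, (fderiv ℝ (gradient g) x) (gradient Φ v)⟫
          - ⟪gradient U x, (fderiv ℝ (gradient Φ) v) (gradient g x)⟫) ∂(mu2 d Φ)
      = ((2 * (volume (Metric.ball (0 : E d) 1)).toReal / ∫ v : E d, Real.exp (-(Φ v)))
            * ∫ u in Ioi (0 : ℝ),
                u ^ ((d : ℝ) / 2) * (derivWithin ψ (Ici 0) u) ^ 2 * Real.exp (-(ψ u)))
          * (lapl d g x - ⟪gradient U x, gradient g x⟫) := by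
  obtain rfl : Φ = fun v => ψ (‖v‖ ^ 2) := funext hΦdef
  have hΦ := (hψ.of_le one_le_two).differentiable_comp_norm_sq (F := E d)
  have hG := hψ.differentiable_gradient_comp_norm_sq (F := E d)
  obtain ⟨hsq, hDG⟩ := (integrable_add_iff_of_nonneg
    (hG.continuous.norm.pow 2).aestronglyMeasurable
    (.of_forall fun _ => by dsimp; positivity) (.of_forall fun _ => by dsimp; positivity)).1 hmom
  have hG2 := (memLp_two_iff_integrable_sq_norm hG.continuous.aestronglyMeasurable).2 hsq
  have hcov := integral_gradient_coord_mul_coord_mu2_of_radial hψ hCΦ hsq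
  rw [integral_sub (integrable_inner_self_apply hG2 _) (integrable_inner_fderiv_apply hDG _ _),
    integral_inner_self_apply_of_isotropic hG2 hcov,
    integral_inner_fderiv_gradient_mu2 hΦ hG hCΦ hG2 hDG,
    integral_inner_mul_inner_of_isotropic hG2 hcov, lapl]
  ring

/-- The kinetic projection identity `π L₀² π = c* L_OD`:
for radial `Φ(v) = ψ(|v|²)`,
`∫ (⟨∇Φ(v), ∇²g(x) ∇Φ(v)⟩ - ⟨∇U(x), ∇²Φ(v) ∇g(x)⟩) μ₂(dv)
  = c* (Δg(x) - ⟨∇U(x), ∇g(x)⟩)`. -/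
theorem statement3
    (d : ℕ) (hd : 0 < d)
    (ψ : ℝ → ℝ) (hψ : ContDiffOn ℝ 2 ψ (Ici 0)) (hψ0 : ∀ r ∈ Ici (0 : ℝ), 0 ≤ ψ r)
    (Φ : E d → ℝ) (hΦdef : ∀ v, Φ v = ψ (‖v‖ ^ 2))
    (hCΦ : Integrable fun v : E d => Real.exp (-(Φ v)))
    (hmom : Integrable (fun v : E d => ‖gradient Φ v‖ ^ 2 + ‖fderiv ℝ (gradient Φ) v‖)
      (mu2 d Φ))
    (hdecay : Tendsto (fun v : E d => ‖gradient (fun w => Real.exp (-(Φ w))) v‖)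
      (Bornology.cobounded (E d)) (𝓝 0))
    (U : E d → ℝ) (hU : ContDiff ℝ 1 U)
    (g : E d → ℝ) (hg : ContDiff ℝ 2 g)
    (hgb : ∃ M, ∀ x, |g x| + ‖gradient g x‖ + ‖fderiv ℝ (gradient g) x‖ ≤ M)
    (x : E d) :
    ∫ v, (⟪gradient Φ v, (fderiv ℝ (gradient g) x) (gradient Φ v)⟫
          - ⟪gradient U x, (fderiv ℝ (gradient Φ) v) (gradient g x)⟫) ∂(mu2 d Φ)
      = ((2 * (volume (Metric.ball (0 : E d) 1)).toReal / ∫ v : E d, Real.exp (-(Φ v)))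
            * ∫ u in Ioi (0 : ℝ),
                u ^ ((d : ℝ) / 2) * (derivWithin ψ (Ici 0) u) ^ 2 * Real.exp (-(ψ u)))
          * (lapl d g x - ⟪gradient U x, gradient g x⟫) :=
  statement3_general d ψ hψ Φ hΦdef hCΦ hmom U g x
end
end

section
/- Let α ∈ (0,2) and let d be a positive integer. There exists a constant C = C(d,α) > 0 such that for every measurable radial nondecreasing Ψ : ℝ^d → [0,∞) with C_Ψ := ∫_{ℝ^d} e^{-Ψ(u)} du < ∞ and every v ∈ ℝ^d with |v| ≥ 2: ∫_{|u|≥1} e^{-Ψ(v−u)} |u|^{-(d+α−1)} du ≤ C [ C_Ψ |v|^{-(d+α−1)} + ( 1_{α∈(1,2)} + 1_{α=1} log|v| + 1_{α∈(0,1)} |v|^{1−α} ) e^{-Ψ(v/2)} ]. -/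
open MeasureTheory Real Filter Topology Set
open scoped RealInnerProductSpace

noncomputable section

/-!
Split `{|u| ≥ 1}` at `|u| = |v|/2`. On the far part `|u|^{-(d+α-1)} ≤ 2^{d+α-1} |v|^{-(d+α-1)}`
and translation invariance of Lebesgue measure leaves `C_Ψ`. On the near part `|v - u| ≥ |v|/2`,
so the monotone radial profile gives `e^{-Ψ(v-u)} ≤ e^{-Ψ(v/2)}`, and polar coordinates turn the
integral of `|u|^{-(d+α-1)}` over the annulus `1 ≤ |u| < |v|/2` into a multiple of
`∫_1^{|v|/2} r^{-α} dr`, which is bounded, logarithmic, or of order `|v|^{1-α}` according as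
`α > 1`, `α = 1` or `α < 1`.
-/

open Module Metric

theorem intervalIntegral_rpow_neg_le_of_one_lt {α R : ℝ} (hα : 1 < α) (hR : 1 ≤ R) :
    ∫ y in (1 : ℝ)..R, y ^ (-α) ≤ (α - 1)⁻¹ := by
  have hR0 : 0 < R := one_pos.trans_le hR
  rw [integral_rpow (Or.inr ⟨by linarith, notMem_uIcc_of_lt one_pos hR0⟩), one_rpow,
    show -α + 1 = -(α - 1) by ring, div_neg, ← neg_div, neg_sub, div_eq_inv_mul]
  have : 0 ≤ R ^ (-(α - 1)) := rpow_nonneg hR0.le _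
  exact mul_le_of_le_one_right (inv_nonneg.2 (by linarith)) (by linarith)

theorem intervalIntegral_rpow_neg_one {R : ℝ} (hR : 0 < R) :
    ∫ y in (1 : ℝ)..R, y ^ (-1 : ℝ) = log R := by
  simp_rw [rpow_neg_one]
  rw [integral_inv_of_pos one_pos hR, div_one]

theorem intervalIntegral_rpow_neg_le_of_lt_one {α : ℝ} (hα : α < 1) (R : ℝ) :
    ∫ y in (1 : ℝ)..R, y ^ (-α) ≤ (1 - α)⁻¹ * R ^ (1 - α) := by
  rw [integral_rpow (Or.inl (by linarith)), one_rpow, show -α + 1 = 1 - α by ring,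
    div_eq_inv_mul]
  exact mul_le_mul_of_nonneg_left (by linarith) (inv_nonneg.2 (by linarith))

def rpowNegIntegralScale (α r : ℝ) : ℝ :=
  (if 1 < α then 1 else 0) + (if α = 1 then log r else 0) + (if α < 1 then r ^ (1 - α) else 0)

theorem rpowNegIntegralScale_nonneg (α : ℝ) {r : ℝ} (hr : 1 ≤ r) :
    0 ≤ rpowNegIntegralScale α r := by
  unfold rpowNegIntegralScale
  have := log_nonneg hr
  have := rpow_nonneg (zero_le_one.trans hr) (1 - α)
  split_ifs <;> linarith

theorem exists_intervalIntegral_rpow_neg_le (α : ℝ) :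
    ∃ K ≥ 0, ∀ R r : ℝ, 1 ≤ R → R ≤ r →
      ∫ y in (1 : ℝ)..R, y ^ (-α) ≤ K * rpowNegIntegralScale α r := by
  rcases lt_trichotomy α 1 with hα | rfl | hα
  · refine ⟨(1 - α)⁻¹, inv_nonneg.2 (by linarith), fun R r hR hRr => ?_⟩
    simp only [rpowNegIntegralScale, if_neg hα.not_gt, if_neg hα.ne, if_pos hα, zero_add]
    refine (intervalIntegral_rpow_neg_le_of_lt_one hα R).trans ?_
    gcongr
  · refine ⟨1, zero_le_one, fun R r hR hRr => ?_⟩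
    simp only [rpowNegIntegralScale, lt_irrefl, if_false, if_true, zero_add, add_zero, one_mul]
    rw [intervalIntegral_rpow_neg_one (one_pos.trans_le hR)]
    exact log_le_log (one_pos.trans_le hR) hRr
  · refine ⟨(α - 1)⁻¹, inv_nonneg.2 (by linarith), fun R r hR _ => ?_⟩
    simpa [rpowNegIntegralScale, hα, hα.ne', hα.not_gt] using
      intervalIntegral_rpow_neg_le_of_one_lt hα hR

theorem setIntegral_annulus_norm_rpow {F : Type*} [NormedAddCommGroup F] [NormedSpace ℝ F]
    [FiniteDimensional ℝ F] [Nontrivial F] [MeasurableSpace F] [BorelSpace F] (μ : Measure F)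
    [μ.IsAddHaarMeasure] (s : ℝ) {R : ℝ} (hR : 1 ≤ R) :
    ∫ u in norm ⁻¹' Ico 1 R, ‖u‖ ^ (-s) ∂μ
      = finrank ℝ F * μ.real (ball 0 1) * ∫ y in (1 : ℝ)..R, y ^ ((finrank ℝ F : ℝ) - 1 - s) := by
  have hdim : 1 ≤ finrank ℝ F := finrank_pos
  rw [← integral_indicator (measurable_norm measurableSet_Ico)]
  change ∫ u, (Ico 1 R).indicator (fun r : ℝ => r ^ (-s)) ‖u‖ ∂μ = _
  rw [integral_fun_norm_addHaar μ, nsmul_eq_mul, smul_eq_mul, mul_assoc,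
    intervalIntegral.integral_of_le hR, ← setIntegral_congr_set Ico_ae_eq_Ioc]
  congr 2
  rw [← integral_indicator measurableSet_Ico, ← integral_indicator measurableSet_Ioi]
  congr 1
  ext y
  by_cases hy : y ∈ Ico (1 : ℝ) R
  · have hy0 : 0 < y := one_pos.trans_le hy.1
    simp only [indicator_of_mem hy, indicator_of_mem (mem_Ioi.2 hy0), smul_eq_mul]
    rw [← rpow_natCast, ← rpow_add hy0, Nat.cast_sub hdim, Nat.cast_one]
    ring_nf
  · simp [indicator_of_notMem hy]

section Convolution

theorem norm_half_smul_le_norm_sub {F : Type*} [NormedAddCommGroup F] [NormedSpace ℝ F]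
    {u v : F} (hu : ‖u‖ ≤ ‖v‖ / 2) : ‖(1 / 2 : ℝ) • v‖ ≤ ‖v - u‖ := by
  rw [norm_smul, norm_of_nonneg (by norm_num : (0 : ℝ) ≤ 1 / 2)]
  linarith [norm_sub_norm_le v u]

variable {F : Type*} [NormedAddCommGroup F] [MeasurableSpace F] {μ : Measure F}
  {w : F → ℝ} {s : ℝ}

theorem setIntegral_comp_sub_mul_norm_rpow_le_of_far [BorelSpace F] [μ.IsAddLeftInvariant]
    [μ.IsNegInvariant] (hw0 : ∀ x, 0 ≤ w x) (hw : Integrable w μ) (hs : 0 ≤ s) {R : ℝ} (hR : 0 < R)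
    {A : Set F} (hA : MeasurableSet A) (hAR : A ⊆ {u | R ≤ ‖u‖}) (v : F) :
    ∫ u in A, w (v - u) * ‖u‖ ^ (-s) ∂μ ≤ R ^ (-s) * ∫ u, w u ∂μ := by
  have hwv : Integrable (fun u => w (v - u) * R ^ (-s)) μ := (hw.comp_sub_left v).mul_const _
  calc ∫ u in A, w (v - u) * ‖u‖ ^ (-s) ∂μ
      ≤ ∫ u in A, w (v - u) * R ^ (-s) ∂μ := by
        refine integral_mono_of_nonneg (ae_of_all _ fun u => mul_nonneg (hw0 _) (by positivity))
          hwv.integrableOn (ae_restrict_of_forall_mem hA fun u hu => ?_)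
        exact mul_le_mul_of_nonneg_left
          (rpow_le_rpow_of_nonpos hR (hAR hu) (neg_nonpos.2 hs)) (hw0 _)
    _ ≤ ∫ u, w (v - u) * R ^ (-s) ∂μ :=
        setIntegral_le_integral hwv (ae_of_all _ fun u => mul_nonneg (hw0 _) (by positivity))
    _ = R ^ (-s) * ∫ u, w u ∂μ := by
        rw [integral_mul_const, integral_sub_left_eq_self w μ v, mul_comm]

theorem setIntegral_comp_sub_mul_norm_rpow_le_of_near [NormedSpace ℝ F]
    (hw0 : ∀ x, 0 ≤ w x) (hw_anti : ∀ x y, ‖x‖ ≤ ‖y‖ → w y ≤ w x) {A : Set F}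
    (hA : MeasurableSet A) (hint : IntegrableOn (fun u => ‖u‖ ^ (-s)) A μ) {v : F}
    (hAv : A ⊆ {u | ‖u‖ ≤ ‖v‖ / 2}) :
    ∫ u in A, w (v - u) * ‖u‖ ^ (-s) ∂μ ≤ w ((1 / 2 : ℝ) • v) * ∫ u in A, ‖u‖ ^ (-s) ∂μ := by
  rw [← integral_const_mul]
  refine integral_mono_of_nonneg (ae_of_all _ fun u => mul_nonneg (hw0 _) (by positivity))
    (hint.const_mul _) (ae_restrict_of_forall_mem hA fun u hu => ?_)
  exact mul_le_mul_of_nonneg_right (hw_anti _ _ (norm_half_smul_le_norm_sub (hAv hu)))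
    (rpow_nonneg (norm_nonneg _) _)

theorem setIntegral_comp_sub_mul_norm_rpow_le [NormedSpace ℝ F] [FiniteDimensional ℝ F]
    [BorelSpace F] (μ : Measure F) [μ.IsAddHaarMeasure] (hw0 : ∀ x, 0 ≤ w x)
    (hw : Integrable w μ) (hw_anti : ∀ x y, ‖x‖ ≤ ‖y‖ → w y ≤ w x) (hs : 0 ≤ s) {v : F}
    (hv : v ≠ 0) :
    ∫ u in {u | 1 ≤ ‖u‖}, w (v - u) * ‖u‖ ^ (-s) ∂μ
      ≤ 2 ^ s * (∫ u, w u ∂μ) * ‖v‖ ^ (-s)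
        + w ((1 / 2 : ℝ) • v) * ∫ u in norm ⁻¹' Ico 1 (‖v‖ / 2), ‖u‖ ^ (-s) ∂μ := by
  have hR : 0 < ‖v‖ / 2 := by positivity
  have hmeas : ∀ r : ℝ, MeasurableSet {u : F | r ≤ ‖u‖} := fun r =>
    measurableSet_le measurable_const measurable_norm
  have hnorm_rpow : Measurable fun u : F => ‖u‖ ^ (-s) := measurable_norm.pow_const _
  have hint : IntegrableOn (fun u => w (v - u) * ‖u‖ ^ (-s)) {u | 1 ≤ ‖u‖} μ :=
    (hw.comp_sub_left v).integrableOn.mul_bdd hnorm_rpow.aestronglyMeasurable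
      (ae_restrict_of_forall_mem (hmeas 1) fun u (hu : 1 ≤ ‖u‖) => by
        rw [norm_of_nonneg (by positivity)]
        exact rpow_le_one_of_one_le_of_nonpos hu (neg_nonpos.2 hs))
  have hannulus : {u : F | 1 ≤ ‖u‖} \ {u | ‖v‖ / 2 ≤ ‖u‖} = norm ⁻¹' Ico 1 (‖v‖ / 2) := by
    ext u; simp
  have hint_annulus : IntegrableOn (fun u => ‖u‖ ^ (-s)) (norm ⁻¹' Ico 1 (‖v‖ / 2)) μ := by
    refine Measure.integrableOn_of_bounded ?_ hnorm_rpow.aestronglyMeasurable (M := 1)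
      (ae_restrict_of_forall_mem (measurable_norm measurableSet_Ico) fun u hu => ?_)
    · exact ((measure_mono fun u hu => mem_closedBall_zero_iff.2 (le_of_lt hu.2)).trans_lt
        measure_closedBall_lt_top).ne
    · rw [norm_of_nonneg (by positivity)]
      exact rpow_le_one_of_one_le_of_nonpos hu.1 (neg_nonpos.2 hs)
  rw [← integral_inter_add_sdiff (hmeas _) hint, hannulus]
  gcongr
  · calc _ ≤ (‖v‖ / 2) ^ (-s) * ∫ u, w u ∂μ :=
          setIntegral_comp_sub_mul_norm_rpow_le_of_far hw0 hw hs hR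
            ((hmeas 1).inter (hmeas _)) inter_subset_right v
      _ = 2 ^ s * (∫ u, w u ∂μ) * ‖v‖ ^ (-s) := by
          rw [div_rpow (norm_nonneg v) zero_le_two, rpow_neg zero_le_two, div_eq_mul_inv,
            inv_inv]
          ring
  · exact setIntegral_comp_sub_mul_norm_rpow_le_of_near hw0 hw_anti
      (measurable_norm measurableSet_Ico) hint_annulus fun u hu => le_of_lt hu.2

end Convolution

/-- Uniform off-diagonal estimate: there is `C = C(d,α) > 0` such that for every radial
nondecreasing `Ψ ≥ 0` with `C_Ψ = ∫ e^{-Ψ} < ∞`, and every `|v| ≥ 2`,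
`∫_{|u|≥1} e^{-Ψ(v-u)} |u|^{-(d+α-1)} du
  ≤ C [C_Ψ |v|^{-(d+α-1)} + (1_{α∈(1,2)} + 1_{α=1} log|v| + 1_{α∈(0,1)} |v|^{1-α}) e^{-Ψ(v/2)}]`. -/
theorem statement13
    (d : ℕ) (hd : 0 < d) (α : ℝ) (hα : α ∈ Ioo (0 : ℝ) 2) :
    ∃ C > 0, ∀ Ψ : E d → ℝ, Measurable Ψ → (∀ v, 0 ≤ Ψ v) →
      (∃ ρ : ℝ → ℝ, MonotoneOn ρ (Ici 0) ∧ ∀ v, Ψ v = ρ ‖v‖) →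
      (Integrable fun u : E d => Real.exp (-(Ψ u))) →
      ∀ v : E d, 2 ≤ ‖v‖ →
        ∫ u in {u : E d | 1 ≤ ‖u‖}, Real.exp (-(Ψ (v - u))) * ‖u‖ ^ (-((d : ℝ) + α - 1))
          ≤ C * ((∫ u : E d, Real.exp (-(Ψ u))) * ‖v‖ ^ (-((d : ℝ) + α - 1))
              + ((if 1 < α then (1 : ℝ) else 0) + (if α = 1 then Real.log ‖v‖ else 0)
                  + (if α < 1 then ‖v‖ ^ (1 - α) else 0))
                * Real.exp (-(Ψ (((1 : ℝ) / 2) • v)))) := by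
  have : Nonempty (Fin d) := ⟨⟨0, hd⟩⟩
  have hs : 0 ≤ (d : ℝ) + α - 1 := by
    have : (1 : ℝ) ≤ d := by exact_mod_cast hd
    linarith [hα.1]
  set s := (d : ℝ) + α - 1
  obtain ⟨K, hK0, hK⟩ := exists_intervalIntegral_rpow_neg_le α
  set c := (d : ℝ) * volume.real (ball (0 : E d) 1)
  refine ⟨2 ^ s + c * K, by positivity, ?_⟩
  rintro Ψ - - ⟨ρ, hρ, hΨρ⟩ hInt v hv
  have hanti : ∀ x y : E d, ‖x‖ ≤ ‖y‖ → exp (-Ψ y) ≤ exp (-Ψ x) := fun x y hxy => by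
    rw [exp_le_exp, neg_le_neg_iff, hΨρ, hΨρ]
    exact hρ (norm_nonneg x) (norm_nonneg y) hxy
  have hannulus := setIntegral_annulus_norm_rpow (volume : Measure (E d)) s (R := ‖v‖ / 2)
    (by linarith)
  rw [finrank_euclideanSpace_fin, show (d : ℝ) - 1 - s = -α by ring] at hannulus
  have hscale := rpowNegIntegralScale_nonneg α (one_le_two.trans hv)
  set CΨ := ∫ u : E d, exp (-Ψ u)
  set e := exp (-Ψ ((1 / 2 : ℝ) • v))
  calc _ ≤ 2 ^ s * CΨ * ‖v‖ ^ (-s) + e * (c * ∫ y in (1 : ℝ)..‖v‖ / 2, y ^ (-α)) := by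
        rw [← hannulus]
        exact setIntegral_comp_sub_mul_norm_rpow_le volume (fun _ => (exp_pos _).le) hInt hanti
          hs (norm_pos_iff.1 (by linarith))
    _ ≤ 2 ^ s * CΨ * ‖v‖ ^ (-s) + e * (c * (K * rpowNegIntegralScale α ‖v‖)) := by
        gcongr
        exact hK _ _ (by linarith) (by linarith)
    _ ≤ (2 ^ s + c * K) * (CΨ * ‖v‖ ^ (-s) + rpowNegIntegralScale α ‖v‖ * e) := by
        have hA : 0 ≤ CΨ * ‖v‖ ^ (-s) :=
          mul_nonneg (integral_nonneg fun _ => (exp_pos _).le) (by positivity)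
        have hBe : 0 ≤ rpowNegIntegralScale α ‖v‖ * e := mul_nonneg hscale (exp_pos _).le
        have hcK : 0 ≤ c * K := by positivity
        nlinarith [mul_nonneg hcK hA, mul_nonneg (rpow_pos_of_pos two_pos s).le hBe]
end
end

section
/- Let α ∈ (0,2) and let d be a positive integer. There exists a constant C = C(d,α) > 0 such that for every measurable radial nondecreasing Ψ : ℝ^d → [0,∞) with C_Ψ := ∫_{ℝ^d} e^{-Ψ(u)} du < ∞ and every v ∈ ℝ^d with |v| ≥ 2: ∫_{|u|≥1} e^{-Ψ(v−u)} |u|^{-(d+α)} du ≤ C [ C_Ψ |v|^{-(d+α)} + e^{-Ψ(v/2)} ]. -/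
/-! Split `{‖u‖ ≥ 1}` according to whether `‖u‖ < ‖v‖ / 2`. For such `u`, `‖v - u‖ ≥ ‖v‖ / 2`,
so radial monotonicity gives `e^{-Ψ(v-u)} ≤ e^{-Ψ(v/2)}` and what is left is the integral of
`‖u‖^{-(d+α)}` over `{‖u‖ ≥ 1}`, finite because `d + α > d`. For the other `u`, the kernel is at
most `2^{d+α} ‖v‖^{-(d+α)}`, and what is left is at most `∫ e^{-Ψ(v-u)} du = C_Ψ`. -/

open MeasureTheory Real Filter Topology Set
open scoped RealInnerProductSpace

noncomputable section

theorem rpow_neg_le_two_rpow_mul_rpow_neg {x y s : ℝ} (hy : 0 < y) (hs : 0 ≤ s)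
    (hyx : y / 2 ≤ x) : x ^ (-s) ≤ 2 ^ s * y ^ (-s) :=
  calc x ^ (-s) ≤ (y / 2) ^ (-s) := rpow_le_rpow_of_nonpos (by positivity) hyx (by linarith)
    _ = 2 ^ s * y ^ (-s) := by
      rw [div_rpow hy.le zero_le_two, rpow_neg zero_le_two, div_inv_eq_mul, mul_comm]

theorem integrableOn_norm_rpow_neg_setOf_one_le_norm {F : Type*} [NormedAddCommGroup F]
    [NormedSpace ℝ F] [FiniteDimensional ℝ F] [MeasurableSpace F] [BorelSpace F]
    (μ : Measure F) [μ.IsAddHaarMeasure] {s : ℝ} (hs : (Module.finrank ℝ F : ℝ) < s) :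
    IntegrableOn (fun u : F => ‖u‖ ^ (-s)) {u | 1 ≤ ‖u‖} μ := by
  refine Integrable.mono' ((integrable_one_add_norm hs).const_mul (2 ^ s)).restrict
    (measurable_norm.pow_const _).aestronglyMeasurable ?_
  refine (ae_restrict_iff' (measurableSet_le measurable_const measurable_norm)).2 ?_
  refine Eventually.of_forall fun u (hu : 1 ≤ ‖u‖) => ?_
  rw [Real.norm_of_nonneg (rpow_nonneg (norm_nonneg u) _)]
  exact rpow_neg_le_two_rpow_mul_rpow_neg (by positivity)
    ((Nat.cast_nonneg _).trans hs.le) (by linarith)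

section Convolution

variable {G : Type*} [NormedAddCommGroup G] [NormedSpace ℝ G] [MeasurableSpace G]
  [BorelSpace G] {μ : Measure G} [μ.IsAddLeftInvariant] [μ.IsNegInvariant]

theorem setIntegral_comp_sub_mul_norm_rpow_neg_le {h : G → ℝ} (hh : Integrable h μ)
    (h0 : 0 ≤ h) (h_anti : ∀ x y, ‖x‖ ≤ ‖y‖ → h y ≤ h x) {A : Set G} (hA : MeasurableSet A)
    {s : ℝ} (hs : 0 ≤ s) (hk : IntegrableOn (fun u => ‖u‖ ^ (-s)) A μ) {v : G} (hv : v ≠ 0) :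
    ∫ u in A, h (v - u) * ‖u‖ ^ (-s) ∂μ ≤
      2 ^ s * ‖v‖ ^ (-s) * ∫ u, h u ∂μ + h ((1 / 2 : ℝ) • v) * ∫ u in A, ‖u‖ ^ (-s) ∂μ := by
  have hk0 (u : G) : 0 ≤ ‖u‖ ^ (-s) := rpow_nonneg (norm_nonneg u) _
  set N := {u : G | ‖u‖ < ‖v‖ / 2}
  have hN : MeasurableSet N := measurableSet_lt measurable_norm measurable_const
  -- `h` is bounded by `h 0`, so the kernel's integrability on `A` is inherited.
  have hf : IntegrableOn (fun u => h (v - u) * ‖u‖ ^ (-s)) A μ := by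
    refine Integrable.mono' (hk.const_mul (h 0))
      ((hh.comp_sub_left v).aestronglyMeasurable.mul
        (measurable_norm.pow_const _).aestronglyMeasurable).restrict
      (Eventually.of_forall fun u => ?_)
    rw [Real.norm_of_nonneg (mul_nonneg (h0 _) (hk0 u))]
    exact mul_le_mul_of_nonneg_right (h_anti _ _ (by simp)) (hk0 u)
  have near : ∫ u in A ∩ N, h (v - u) * ‖u‖ ^ (-s) ∂μ ≤
      h ((1 / 2 : ℝ) • v) * ∫ u in A, ‖u‖ ^ (-s) ∂μ := calc
    _ ≤ ∫ u in A ∩ N, h ((1 / 2 : ℝ) • v) * ‖u‖ ^ (-s) ∂μ := by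
      refine setIntegral_mono_on (hf.mono_set inter_subset_left)
        ((hk.mono_set inter_subset_left).const_mul _) (hA.inter hN) fun u hu => ?_
      have hvu : ‖(1 / 2 : ℝ) • v‖ ≤ ‖v - u‖ := by
        rw [norm_smul, Real.norm_of_nonneg (by norm_num)]
        have hu' : ‖u‖ < ‖v‖ / 2 := hu.2
        linarith [norm_sub_norm_le v u]
      exact mul_le_mul_of_nonneg_right (h_anti _ _ hvu) (hk0 u)
    _ = h ((1 / 2 : ℝ) • v) * ∫ u in A ∩ N, ‖u‖ ^ (-s) ∂μ := integral_const_mul _ _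
    _ ≤ _ := mul_le_mul_of_nonneg_left (setIntegral_mono_set hk
      (Eventually.of_forall hk0) inter_subset_left.eventuallyLE) (h0 _)
  have far : ∫ u in A \ N, h (v - u) * ‖u‖ ^ (-s) ∂μ ≤ 2 ^ s * ‖v‖ ^ (-s) * ∫ u, h u ∂μ := calc
    _ ≤ ∫ u in A \ N, h (v - u) * (2 ^ s * ‖v‖ ^ (-s)) ∂μ := by
      refine setIntegral_mono_on (hf.mono_set sdiff_subset)
        ((hh.comp_sub_left v).mul_const _).integrableOn (hA.diff hN) fun u hu => ?_
      exact mul_le_mul_of_nonneg_left (rpow_neg_le_two_rpow_mul_rpow_neg (norm_pos_iff.2 hv)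
        hs (not_lt.1 hu.2)) (h0 _)
    _ = (∫ u in A \ N, h (v - u) ∂μ) * (2 ^ s * ‖v‖ ^ (-s)) := integral_mul_const _ _
    _ ≤ (∫ u, h (v - u) ∂μ) * (2 ^ s * ‖v‖ ^ (-s)) := mul_le_mul_of_nonneg_right
      (setIntegral_le_integral (hh.comp_sub_left v) (Eventually.of_forall fun u => h0 (v - u)))
      (by positivity)
    _ = _ := by rw [integral_sub_left_eq_self h μ v, mul_comm]
  rw [← integral_inter_add_sdiff hN hf]
  linarith

end Convolution

theorem statement14_general
    (d : ℕ) (α : ℝ) (hα : α ∈ Ioo (0 : ℝ) 2) :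
    ∃ C > 0, ∀ Ψ : E d → ℝ, Measurable Ψ → (∀ v, 0 ≤ Ψ v) →
      (∃ ρ : ℝ → ℝ, MonotoneOn ρ (Ici 0) ∧ ∀ v, Ψ v = ρ ‖v‖) →
      (Integrable fun u : E d => Real.exp (-(Ψ u))) →
      ∀ v : E d, 2 ≤ ‖v‖ →
        ∫ u in {u : E d | 1 ≤ ‖u‖}, Real.exp (-(Ψ (v - u))) * ‖u‖ ^ (-((d : ℝ) + α))
          ≤ C * ((∫ u : E d, Real.exp (-(Ψ u))) * ‖v‖ ^ (-((d : ℝ) + α))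
              + Real.exp (-(Ψ (((1 : ℝ) / 2) • v)))) := by
  set s : ℝ := d + α
  have hs : (Module.finrank ℝ (E d) : ℝ) < s := by simp [s, hα.1]
  have hk := integrableOn_norm_rpow_neg_setOf_one_le_norm volume hs
  set K := ∫ u in {u : E d | 1 ≤ ‖u‖}, ‖u‖ ^ (-s)
  have hK : 0 ≤ K := setIntegral_nonneg (measurableSet_le measurable_const measurable_norm)
    fun u _ => rpow_nonneg (norm_nonneg u) _
  refine ⟨2 ^ s + K, by positivity, ?_⟩
  rintro Ψ - - ⟨ρ, hρ, hΨρ⟩ hΨ v hv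
  have h_anti (x y : E d) (hxy : ‖x‖ ≤ ‖y‖) : exp (-Ψ y) ≤ exp (-Ψ x) := by
    rw [hΨρ, hΨρ]
    exact exp_le_exp.2 (neg_le_neg (hρ (norm_nonneg x) (norm_nonneg y) hxy))
  have hv0 : v ≠ 0 := norm_pos_iff.1 (by linarith)
  have key := setIntegral_comp_sub_mul_norm_rpow_neg_le hΨ (fun _ => (exp_pos _).le)
    h_anti (measurableSet_le measurable_const measurable_norm) ((Nat.cast_nonneg _).trans hs.le)
    hk hv0
  have hI : 0 ≤ ∫ u, exp (-Ψ u) := integral_nonneg fun _ => (exp_pos _).le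
  have hvs : 0 ≤ ‖v‖ ^ (-s) := rpow_nonneg (norm_nonneg v) _
  have hhalf : 0 ≤ exp (-Ψ (((1 : ℝ) / 2) • v)) := (exp_pos _).le
  refine key.trans ?_
  nlinarith [mul_nonneg (mul_nonneg hI hvs) hK, mul_nonneg hhalf (by positivity : (0 : ℝ) ≤ 2 ^ s)]

/-- Uniform off-diagonal estimate: there is `C = C(d,α) > 0` such that for every radial
nondecreasing `Ψ ≥ 0` with `C_Ψ = ∫ e^{-Ψ} < ∞`, and every `|v| ≥ 2`,
`∫_{|u|≥1} e^{-Ψ(v-u)} |u|^{-(d+α)} du ≤ C [C_Ψ |v|^{-(d+α)} + e^{-Ψ(v/2)}]`. -/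
theorem statement14
    (d : ℕ) (hd : 0 < d) (α : ℝ) (hα : α ∈ Ioo (0 : ℝ) 2) :
    ∃ C > 0, ∀ Ψ : E d → ℝ, Measurable Ψ → (∀ v, 0 ≤ Ψ v) →
      (∃ ρ : ℝ → ℝ, MonotoneOn ρ (Ici 0) ∧ ∀ v, Ψ v = ρ ‖v‖) →
      (Integrable fun u : E d => Real.exp (-(Ψ u))) →
      ∀ v : E d, 2 ≤ ‖v‖ →
        ∫ u in {u : E d | 1 ≤ ‖u‖}, Real.exp (-(Ψ (v - u))) * ‖u‖ ^ (-((d : ℝ) + α))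
          ≤ C * ((∫ u : E d, Real.exp (-(Ψ u))) * ‖v‖ ^ (-((d : ℝ) + α))
              + Real.exp (-(Ψ (((1 : ℝ) / 2) • v)))) :=
  statement14_general d α hα
end
end

section
/- Let H be a real Hilbert space and π : H → H a bounded linear operator with π ∘ π = π and ⟨πu, w⟩ = ⟨u, πw⟩ for all u, w ∈ H (orthogonal projection). Let λ, α₁, α₂ > 0 and α₃ ≥ 1, and set ε₀ := (1/2) min{ √λ, (1+λα₂)/α₁, 1/(α₁(1+λα₂)α₃²) }. Let B : H → H be a bounded linear operator and suppose f, g ∈ H satisfy: (i) ⟨g, f⟩ ≤ −(1/α₁) ‖f − πf‖²; (ii) |⟨Bf, g⟩| ≤ ‖f − πf‖ · ‖f‖; (iii) ⟨Bg, f⟩ ≤ −(1/(1+λα₂)) ‖πf‖² + α₃ ‖πf‖ · ‖f − πf‖. Then ⟨g, f⟩ + ε₀ ( ⟨Bf, g⟩ + ⟨Bg, f⟩ ) ≤ −( ε₀ / (4(1+λα₂)) ) ‖f‖². (This is the key dissipation inequality in the proof of the hypocoercivity theorem for the modified entropy functional I_λ(f) = (1/2)‖f‖² + ε₀⟨Bf,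 f⟩, applied along a trajectory with g = Lf.) -/
/-!
Write `a = ‖f - π f‖`, `b = ‖π f‖`, so that `‖f‖² = a² + b²`. The hypotheses bound the left-hand
side by `-a²/α₁ + ε₀ (a ‖f‖ - b²/c + α₃ a b)` with `c = 1 + λα₂`. Young's inequality splits the two
cross terms into multiples of `a²` and `b²`; the `b²` terms leave `-ε₀ b²/(4c)`, and the choice of
`ε₀` (through its second and third entries) makes the remaining `a²` coefficient at most
`-ε₀/(4c)` as well.
-/

open scoped RealInnerProductSpace

theorem norm_sq_eq_norm_sub_sq_add_norm_sq_of_symm_of_idem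
    {H : Type*} [NormedAddCommGroup H] [InnerProductSpace ℝ H] {P : H → H}
    (hproj : ∀ u, P (P u) = P u) (hsym : ∀ u w : H, ⟪P u, w⟫ = ⟪u, P w⟫) (f : H) :
    ‖f‖ ^ 2 = ‖f - P f‖ ^ 2 + ‖P f‖ ^ 2 := by
  have horth : ⟪f - P f, P f⟫ = 0 := by
    rw [inner_sub_left, hsym f (P f), hproj, sub_self]
  simpa only [sq, sub_add_cancel] using norm_add_sq_eq_norm_sq_add_norm_sq_real horth

theorem mul_le_mul_sq_add_sq_div {c : ℝ} (hc : 0 < c) (x y : ℝ) :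
    x * y ≤ c * x ^ 2 + y ^ 2 / (4 * c) := by
  have hsq : c * x ^ 2 + y ^ 2 / (4 * c) - x * y = (2 * c * x - y) ^ 2 / (4 * c) := by
    field_simp
    ring
  have : 0 ≤ (2 * c * x - y) ^ 2 / (4 * c) := by positivity
  linarith

theorem hypocoercive_dissipation_bound {α₁ α₃ c ε a b F : ℝ} (hα₁ : 0 < α₁) (hc : 0 < c)
    (hα₃ : 1 ≤ α₃) (hε : 0 ≤ ε) (hεc : 2 * ε ≤ c / α₁) (hεα : 2 * ε ≤ 1 / (α₁ * c * α₃ ^ 2))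
    (hF : F ^ 2 = a ^ 2 + b ^ 2) :
    -(1 / α₁) * a ^ 2 + ε * (a * F + (-(1 / c) * b ^ 2 + α₃ * b * a))
      ≤ -(ε / (4 * c)) * F ^ 2 := by
  have hεc' : ε / c / 2 ≤ 1 / α₁ / 4 := by
    rw [le_div_iff₀ hα₁] at hεc
    rw [div_div, div_div, div_le_div_iff₀ (by positivity) (by positivity)]
    linarith
  have hεα' : ε * c * α₃ ^ 2 ≤ 1 / α₁ / 2 := by
    rw [le_div_iff₀ (by positivity)] at hεα
    rw [div_div, le_div_iff₀ (by positivity)]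
    linarith
  have hεc_le : ε * c ≤ ε * c * α₃ ^ 2 :=
    le_mul_of_one_le_right (by positivity) (one_le_pow₀ hα₃)
  set κ := 1 / α₁ - ε * c - ε / c / 2 - ε * c * α₃ ^ 2 / 2 with hκ
  have hκ_nonneg : 0 ≤ κ := by linarith
  have young₁ : a * F ≤ c * a ^ 2 + F ^ 2 / (4 * c) := mul_le_mul_sq_add_sq_div hc a F
  have young₂ : α₃ * b * a ≤ c * (α₃ * a) ^ 2 / 2 + b ^ 2 / (2 * c) := by
    have h := mul_le_mul_sq_add_sq_div (half_pos hc) (α₃ * a) b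
    have hden : b ^ 2 / (4 * (c / 2)) = b ^ 2 / (2 * c) := by ring
    linarith
  calc -(1 / α₁) * a ^ 2 + ε * (a * F + (-(1 / c) * b ^ 2 + α₃ * b * a))
      ≤ -(1 / α₁) * a ^ 2
          + ε * (c * a ^ 2 + F ^ 2 / (4 * c) + (-(1 / c) * b ^ 2 + (c * (α₃ * a) ^ 2 / 2
            + b ^ 2 / (2 * c)))) := by gcongr
    _ = -(ε / (4 * c)) * F ^ 2 - κ * a ^ 2 := by
        rw [hF, hκ]
        field_simp
        ring
    _ ≤ -(ε / (4 * c)) * F ^ 2 := sub_le_self _ (by positivity)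

/-- The key dissipation inequality in the proof of the hypocoercivity theorem for the
modified entropy functional `I_λ(f) = (1/2)‖f‖² + ε₀⟨Bf, f⟩`, applied along a trajectory
with `g = Lf`. -/
theorem statement15
    {H : Type*} [NormedAddCommGroup H] [InnerProductSpace ℝ H]
    (P : H →L[ℝ] H) (hproj : ∀ u, P (P u) = P u)
    (hsym : ∀ u w : H, ⟪P u, w⟫ = ⟪u, P w⟫)
    (lam α₁ α₂ α₃ : ℝ) (hlam : 0 < lam) (hα₁ : 0 < α₁) (hα₂ : 0 < α₂) (hα₃ : 1 ≤ α₃)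
    (ε₀ : ℝ)
    (hε₀ : ε₀ = (1 / 2) * min (Real.sqrt lam)
      (min ((1 + lam * α₂) / α₁) (1 / (α₁ * (1 + lam * α₂) * α₃ ^ 2))))
    (B : H →L[ℝ] H) (f g : H)
    (h1 : ⟪g, f⟫ ≤ -(1 / α₁) * ‖f - P f‖ ^ 2)
    (h2 : |⟪B f, g⟫| ≤ ‖f - P f‖ * ‖f‖)
    (h3 : ⟪B g, f⟫ ≤ -(1 / (1 + lam * α₂)) * ‖P f‖ ^ 2 + α₃ * ‖P f‖ * ‖f - P f‖) :
    ⟪g, f⟫ + ε₀ * (⟪B f, g⟫ + ⟪B g, f⟫) ≤ -(ε₀ / (4 * (1 + lam * α₂))) * ‖f‖ ^ 2 := by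
  set c := 1 + lam * α₂
  have hc : 0 < c := by positivity
  have hε : 0 ≤ ε₀ := by rw [hε₀]; positivity
  have hεc : 2 * ε₀ ≤ c / α₁ := by
    have : min (Real.sqrt lam) (min (c / α₁) (1 / (α₁ * c * α₃ ^ 2))) ≤ c / α₁ :=
      min_le_of_right_le (min_le_left _ _)
    linarith
  have hεα : 2 * ε₀ ≤ 1 / (α₁ * c * α₃ ^ 2) := by
    have : min (Real.sqrt lam) (min (c / α₁) (1 / (α₁ * c * α₃ ^ 2))) ≤ 1 / (α₁ * c * α₃ ^ 2) :=
      min_le_of_right_le (min_le_right _ _)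
    linarith
  calc ⟪g, f⟫ + ε₀ * (⟪B f, g⟫ + ⟪B g, f⟫)
      ≤ -(1 / α₁) * ‖f - P f‖ ^ 2 + ε₀ * (‖f - P f‖ * ‖f‖
          + (-(1 / c) * ‖P f‖ ^ 2 + α₃ * ‖P f‖ * ‖f - P f‖)) :=
        add_le_add h1 (mul_le_mul_of_nonneg_left (add_le_add (le_of_abs_le h2) h3) hε)
    _ ≤ -(ε₀ / (4 * c)) * ‖f‖ ^ 2 :=
        hypocoercive_dissipation_bound hα₁ hc hα₃ hε hεc hεα
          (norm_sq_eq_norm_sub_sq_add_norm_sq_of_symm_of_idem hproj hsym f)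
end
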